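/- arXiv:1903.10181 — 7 statements merged into one kernel-verified Lean document; each statement's English description precedes it below -/
import Mathlib

section
/- Let τ, β > 0 and r > 0 (with r playing the role of |ξ|²). Define a₀ = τ, a₁ = 1 + τr, a₂ = (β+1)r, a₃ = (βr+1)r, a₄ = r². Then the Hurwitz determinant A₃ = a₁a₂a₃ − a₀a₃² − a₁²a₄ equals r²(β−τ)(τr² + (β+1)r + 1). In particular A₃ > 0 if and only if τ < β. -/
theorem stmt_4 (τ β r : ℝ) (hτ : 0 < τ) (hβ : 0 < β) (hr : 0 < r) :
    let a₀ := τ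
    let a₁ := 1 + τ * r
    let a₂ := (β + 1) * r
    let a₃ := (β * r + 1) * r
    let a₄ := r ^ 2
    let A₃ := a₁ * a₂ * a₃ - a₀ * a₃ ^ 2 - a₁ ^ 2 * a₄
    A₃ = r ^ 2 * (β - τ) * (τ * r ^ 2 + (β + 1) * r + 1) ∧ (0 < A₃ ↔ τ < β) := by
  intro a₀ a₁ a₂ a₃ a₄ A₃
  have heq : A₃ = r ^ 2 * (β - τ) * (τ * r ^ 2 + (β + 1) * r + 1) := by
    simp only [A₃, a₀, a₁, a₂, a₃, a₄]; ring
  refine ⟨heq, ?_⟩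
  rw [heq]
  have h1 : 0 < τ * r ^ 2 + (β + 1) * r + 1 := by positivity
  have h2 : 0 < r ^ 2 := by positivity
  constructor
  · intro h
    by_contra hc
    push_neg at hc
    have : β - τ ≤ 0 := by linarith
    nlinarith [mul_pos h2 h1]
  · intro h
    have : 0 < β - τ := by linarith
    positivity
end

section
/- Let τ > 0, β > 0 with τ < β, and r > 0. Then all roots of the real polynomial p₀(λ) = τλ⁴ + (1+τr)λ³ + (β+1)r λ² + (βr+1)r λ + r² have strictly negative real part. -/
set_option maxHeartbeats 2000000

theorem stmt_5 (τ β r : ℝ) (hτ : 0 < τ) (hβ : 0 < β) (hτβ : τ < β) (hr : 0 < r) :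
    ∀ z : ℂ, (τ : ℂ) * z ^ 4 + (1 + τ * r) * z ^ 3 + ((β + 1) * r) * z ^ 2
        + ((β * r + 1) * r) * z + (r : ℂ) ^ 2 = 0 → z.re < 0 := by
  obtain ⟨δ, hδ, rfl⟩ : ∃ δ, 0 < δ ∧ β = τ + δ := ⟨β - τ, by linarith, by ring⟩
  intro z hz
  by_contra hre
  push_neg at hre
  set x := z.re with hx
  set y := z.im with hy
  rw [show z = (x : ℂ) + (y : ℂ) * Complex.I from (Complex.re_add_im z).symm] at hz
  rw [Complex.ext_iff] at hz
  obtain ⟨h1, h2⟩ := hz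
  simp only [pow_succ, pow_zero, one_mul, Complex.add_re, Complex.add_im, Complex.mul_re,
    Complex.mul_im, Complex.ofReal_re, Complex.ofReal_im, Complex.I_re, Complex.I_im,
    Complex.one_re, Complex.one_im, Complex.zero_re, Complex.zero_im] at h1 h2
  have hA : τ*(x^4 - 6*x^2*y^2 + y^4) + (1+τ*r)*(x^3 - 3*x*y^2)
      + ((τ+δ)+1)*r*(x^2 - y^2) + ((τ+δ)*r+1)*r*x + r^2 = 0 := by
    linear_combination h1
  have hB : y * (4*τ*x^3 - 4*τ*x*y^2 + (1+τ*r)*(3*x^2 - y^2)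
      + 2*((τ+δ)+1)*r*x + ((τ+δ)*r+1)*r) = 0 := by
    linear_combination h2
  by_cases hy0 : y = 0
  · rw [hy0] at hA
    nlinarith [mul_nonneg hτ.le (pow_nonneg hre 4), mul_nonneg hτ.le hr.le,
      mul_nonneg (mul_nonneg hτ.le hr.le) (pow_nonneg hre 3), pow_nonneg hre 3,
      mul_pos hr hr, mul_nonneg hr.le hre, mul_nonneg (mul_nonneg hr.le hr.le) hre,
      mul_nonneg hδ.le hr.le, pow_nonneg hre 2, mul_nonneg hr.le (pow_nonneg hre 2),
      mul_nonneg (mul_nonneg hδ.le hr.le) (pow_nonneg hre 2),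
      mul_nonneg (mul_nonneg hτ.le hr.le) (pow_nonneg hre 2),
      mul_nonneg (mul_nonneg (mul_nonneg hτ.le hr.le) hr.le) hre,
      mul_nonneg (mul_nonneg (mul_nonneg hδ.le hr.le) hr.le) hre]
  · have hG : 4*τ*x^3 - 4*τ*x*y^2 + (1+τ*r)*(3*x^2 - y^2)
        + 2*((τ+δ)+1)*r*x + ((τ+δ)*r+1)*r = 0 :=
      mul_left_cancel₀ hy0 (by linear_combination hB)
    have hP : 8*x^3 + 2*r*x + 8*r*x^2 + 2*r^2*x + 8*δ*r*x^2 + δ*r^2 + 6*δ*r^2*x + δ*r^3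
        + 2*δ^2*r^2*x + δ^2*r^3 + 48*τ*x^4 + 12*τ*r*x^2 + 56*τ*r*x^3 + 2*τ*r^2*x
        + 20*τ*r^2*x^2 + 2*τ*r^3*x + 32*τ*δ*r*x^3 + 4*τ*δ*r^2*x + 28*τ*δ*r^2*x^2 + τ*δ*r^3
        + 8*τ*δ*r^3*x + τ*δ*r^4 + 4*τ*δ^2*r^2*x^2 + 2*τ*δ^2*r^3*x + 96*τ^2*x^5
        + 32*τ^2*r*x^3 + 128*τ^2*r*x^4 + 2*τ^2*r^2*x + 16*τ^2*r^2*x^2 + 56*τ^2*r^2*x^3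
        + 2*τ^2*r^3*x + 8*τ^2*r^3*x^2 + 32*τ^2*δ*r*x^4 + 8*τ^2*δ*r^2*x^2 + 32*τ^2*δ*r^2*x^3
        + 4*τ^2*δ*r^3*x + 12*τ^2*δ*r^3*x^2 + 2*τ^2*δ*r^4*x + 64*τ^3*x^6 + 32*τ^3*r*x^4
        + 96*τ^3*r*x^5 + 4*τ^3*r^2*x^2 + 32*τ^3*r^2*x^3 + 48*τ^3*r^2*x^4 + 2*τ^3*r^3*x
        + 12*τ^3*r^3*x^2 + 8*τ^3*r^3*x^3 + 2*τ^3*r^4*x = 0 := by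
      linear_combination (-(4*τ*x + (1+τ*r))^2) * hA
        + (-(τ*(y^2*(4*τ*x + (1+τ*r)) + (4*τ*x^3 + 3*(1+τ*r)*x^2 + 2*((τ+δ)+1)*r*x
            + ((τ+δ)*r+1)*r))
          - (4*τ*x + (1+τ*r))*(6*τ*x^2 + 3*(1+τ*r)*x + ((τ+δ)+1)*r))) * hG
    have hPpos : 0 < 8*x^3 + 2*r*x + 8*r*x^2 + 2*r^2*x + 8*δ*r*x^2 + δ*r^2 + 6*δ*r^2*x + δ*r^3
        + 2*δ^2*r^2*x + δ^2*r^3 + 48*τ*x^4 + 12*τ*r*x^2 + 56*τ*r*x^3 + 2*τ*r^2*x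
        + 20*τ*r^2*x^2 + 2*τ*r^3*x + 32*τ*δ*r*x^3 + 4*τ*δ*r^2*x + 28*τ*δ*r^2*x^2 + τ*δ*r^3
        + 8*τ*δ*r^3*x + τ*δ*r^4 + 4*τ*δ^2*r^2*x^2 + 2*τ*δ^2*r^3*x + 96*τ^2*x^5
        + 32*τ^2*r*x^3 + 128*τ^2*r*x^4 + 2*τ^2*r^2*x + 16*τ^2*r^2*x^2 + 56*τ^2*r^2*x^3
        + 2*τ^2*r^3*x + 8*τ^2*r^3*x^2 + 32*τ^2*δ*r*x^4 + 8*τ^2*δ*r^2*x^2 + 32*τ^2*δ*r^2*x^3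
        + 4*τ^2*δ*r^3*x + 12*τ^2*δ*r^3*x^2 + 2*τ^2*δ*r^4*x + 64*τ^3*x^6 + 32*τ^3*r*x^4
        + 96*τ^3*r*x^5 + 4*τ^3*r^2*x^2 + 32*τ^3*r^2*x^3 + 48*τ^3*r^2*x^4 + 2*τ^3*r^3*x
        + 12*τ^3*r^3*x^2 + 8*τ^3*r^3*x^3 + 2*τ^3*r^4*x := by positivity
    linarith [hP, hPpos]
end

section
/- Let τ, β, η > 0 with τ ≤ β, and r > 0. Then all roots of the polynomial p_F(λ) = τλ⁴ + (1+τr)λ³ + (τη²r + β + 1)r λ² + ((η²+β)r + 1)r λ + r² have strictly negative real part. -/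
set_option maxHeartbeats 2000000

theorem stmt_7 (τ β η r : ℝ) (hτ : 0 < τ) (hβ : 0 < β) (hη : 0 < η)
    (hτβ : τ ≤ β) (hr : 0 < r) :
    ∀ z : ℂ, (τ : ℂ) * z ^ 4 + (1 + τ * r) * z ^ 3
        + ((τ * η ^ 2 * r + β + 1) * r) * z ^ 2
        + (((η ^ 2 + β) * r + 1) * r) * z + (r : ℂ) ^ 2 = 0 → z.re < 0 := by
  obtain ⟨d, hd0, rfl⟩ : ∃ d, 0 ≤ d ∧ β = τ + d := ⟨β - τ, by linarith, by ring⟩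
  intro z h
  by_contra hx'
  push_neg at hx'
  set x : ℝ := z.re with hxdef
  set y : ℝ := z.im with hydef
  have hx : 0 ≤ x := hx'
  have hz : z = (x : ℂ) + (y : ℂ) * Complex.I := (Complex.re_add_im z).symm
  rw [hz] at h
  have hre := congrArg Complex.re h
  have him := congrArg Complex.im h
  simp only [Complex.add_re, Complex.add_im, Complex.mul_re, Complex.mul_im,
    Complex.I_re, Complex.I_im, Complex.ofReal_re, Complex.ofReal_im,
    Complex.one_re, Complex.one_im, Complex.zero_re, Complex.zero_im,
    pow_succ, pow_zero, one_mul, mul_zero, zero_mul, mul_one, sub_zero,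
    zero_sub, add_zero, zero_add, neg_neg, neg_zero] at hre him
  -- canonical real and imaginary parts
  have h1 : τ*(x^4 - 6*x^2*y^2 + y^4) + (1+τ*r)*(x^3 - 3*x*y^2)
      + ((τ*η^2*r + (τ+d) + 1)*r)*(x^2 - y^2) + (((η^2+(τ+d))*r + 1)*r)*x + r^2 = 0 := by
    linear_combination hre
  have h2 : y * ((4*τ*x^3 + 3*(1+τ*r)*x^2 + 2*((τ*η^2*r + (τ+d) + 1)*r)*x
      + ((η^2+(τ+d))*r + 1)*r) - (4*τ*x + (1+τ*r))*y^2) = 0 := by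
    linear_combination him
  rcases eq_or_ne y 0 with hy | hy
  · -- real root case
    rw [hy] at h1
    have hpos : 0 < τ*x^4 + (1+τ*r)*x^3 + (τ*η^2*r + (τ+d) + 1)*r*x^2
        + ((η^2+(τ+d))*r + 1)*r*x + r^2 := by positivity
    nlinarith [h1, hpos]
  · have hIm2 : (4*τ*x^3 + 3*(1+τ*r)*x^2 + 2*((τ*η^2*r + (τ+d) + 1)*r)*x
        + ((η^2+(τ+d))*r + 1)*r) - (4*τ*x + (1+τ*r))*y^2 = 0 := by
      rcases mul_eq_zero.mp h2 with h' | h'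
      · exact absurd h' hy
      · exact h'
    set N : ℝ := 4*x^3*τ + 3*x^2*τ*r + 3*x^2 + 2*x*τ*r^2*η^2 + 2*x*τ*r + 2*x*r*d + 2*x*r + τ*r^2 + r^2*η^2 + r^2*d + r with hN
    set D : ℝ := 4*x*τ + τ*r + 1 with hD
    set B : ℝ := 6*x^2*τ + 3*x*τ*r + 3*x + τ*r^2*η^2 + τ*r + r*d + r with hB
    have key : 64*x^6*τ^3 + 96*x^5*τ^3*r + 96*x^5*τ^2 + 32*x^4*τ^3*r^2*η^2 + 48*x^4*τ^3*r^2 + 32*x^4*τ^3*r + 32*x^4*τ^2*r*d + 128*x^4*τ^2*r + 48*x^4*τ + 32*x^3*τ^3*r^3*η^2 + 8*x^3*τ^3*r^3 + 32*x^3*τ^3*r^2 + 32*x^3*τ^2*r^2*η^2 + 32*x^3*τ^2*r^2*d + 56*x^3*τ^2*r^2 + 32*x^3*τ^2*r + 32*x^3*τ*r*d + 56*x^3*τ*r + 8*x^3 + 4*x^2*τ^3*r^4*η^4 + 8*x^2*τ^3*r^4*η^2 + 8*x^2*τ^3*r^3*η^2 + 12*x^2*τ^3*r^3 + 4*x^2*τ^3*r^2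 + 8*x^2*τ^2*r^3*η^2*d + 28*x^2*τ^2*r^3*η^2 + 12*x^2*τ^2*r^3*d + 8*x^2*τ^2*r^3 + 8*x^2*τ^2*r^2*d + 16*x^2*τ^2*r^2 + 12*x^2*τ*r^2*η^2 + 4*x^2*τ*r^2*d^2 + 28*x^2*τ*r^2*d + 20*x^2*τ*r^2 + 12*x^2*τ*r + 8*x^2*r*d + 8*x^2*r + 2*x*τ^3*r^5*η^4 + 4*x*τ^3*r^4*η^2 + 2*x*τ^3*r^4 + 2*x*τ^3*r^3 + 2*x*τ^2*r^4*η^4 + 4*x*τ^2*r^4*η^2*d + 6*x*τ^2*r^4*η^2 + 2*x*τ^2*r^4*d + 4*x*τ^2*r^3*η^2 + 4*x*τ^2*r^3*d + 2*x*τ^2*r^3 + 2*x*τ^2*r^2 + 4*x*τ*r^3*η^2*d + 8*x*τ*r^3*η^2 + 2*x*τ*r^3*d^2 + 8*x*τ*r^3*d + 2*x*τ*r^3 + 4*x*τ*r^2*d + 2*x*τ*r^2 + 2*x*r^2*η^2 + 2*x*r^2*d^2 + 6*x*r^2*d + 2*x*r^2 + 2*x*r + τ^3*r^5*η^2 + τ^2*r^5*η^4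 + τ^2*r^5*η^2*d + τ^2*r^4*η^2 + τ*r^4*η^2 + τ*r^4*d + τ*r^3*d + r^3*η^2*d + r^3*η^2 + r^3*d^2 + r^3*d + r^2*d = 0 := by
      linear_combination (-(D^2)) * h1 + (-(τ*(N + D*y^2) - B*D)) * hIm2
    obtain ⟨u, hu⟩ : ∃ u : ℝ, x = u^2 := ⟨Real.sqrt x, (Real.sq_sqrt hx).symm⟩
    obtain ⟨v, hv⟩ : ∃ v : ℝ, d = v^2 := ⟨Real.sqrt d, (Real.sq_sqrt hd0).symm⟩
    rw [hu, hv] at key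
    exact absurd key (by positivity)
end

section
/- Let τ, τ₀, η, κ, β > 0 with 0 < τ < β. Then every root (real or complex) of the cubic τη²τ₀ X³ + η²(τ₀+τ) X² + (η² + βκ²) X + κ² = 0 has strictly negative real part. -/
theorem aux_rh (a b c d : ℝ) (ha : 0 < a) (hb : 0 < b) (hc : 0 < c) (hd : 0 < d)
    (hrh : a * d < b * c) :
    ∀ z : ℂ, (a : ℂ) * z ^ 3 + (b : ℂ) * z ^ 2 + (c : ℂ) * z + (d : ℂ) = 0 → z.re < 0 := by
  intro z h
  by_contra hx
  push_neg at hx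
  have hre := congrArg Complex.re h
  have him := congrArg Complex.im h
  simp only [Complex.add_re, Complex.add_im, Complex.mul_re, Complex.mul_im,
    Complex.ofReal_re, Complex.ofReal_im, Complex.zero_re, Complex.zero_im,
    pow_succ, pow_zero, one_mul] at hre him
  ring_nf at hre him
  set x := z.re with hxdef
  set y := z.im with hydef
  rcases eq_or_ne y 0 with hy | hy
  · rw [hy] at hre
    nlinarith [mul_nonneg (mul_nonneg ha.le hx) (mul_nonneg hx hx),
      mul_nonneg (mul_nonneg hb.le hx) hx, mul_nonneg hc.le hx]
  · have hq : a * y ^ 2 - 3 * a * x ^ 2 - 2 * b * x - c = 0 := by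
      have h2 : y * (a * y ^ 2 - 3 * a * x ^ 2 - 2 * b * x - c) = 0 := by
        linear_combination -him
      rcases mul_eq_zero.mp h2 with h3 | h3
      · exact absurd h3 hy
      · exact h3
    have key : 8 * a ^ 2 * x ^ 3 + 8 * a * b * x ^ 2 + 2 * a * c * x + 2 * b ^ 2 * x
        + (b * c - a * d) = 0 := by
      linear_combination (-a) * hre + (-(3 * a * x) - b) * hq
    nlinarith [mul_nonneg (mul_nonneg (mul_nonneg ha.le ha.le) hx) (mul_nonneg hx hx),
      mul_nonneg (mul_nonneg (mul_nonneg ha.le hb.le) hx) hx,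
      mul_nonneg (mul_nonneg ha.le hc.le) hx,
      mul_nonneg (mul_nonneg hb.le hb.le) hx]

theorem stmt_10 (τ τ₀ η κ β : ℝ) (hτ : 0 < τ) (hτ₀ : 0 < τ₀) (hη : 0 < η)
    (hκ : 0 < κ) (hβ : 0 < β) (hτβ : τ < β) :
    ∀ z : ℂ, (τ * η ^ 2 * τ₀ : ℂ) * z ^ 3 + (η ^ 2 * (τ₀ + τ) : ℂ) * z ^ 2
        + ((η ^ 2 + β * κ ^ 2 : ℝ) : ℂ) * z + (κ ^ 2 : ℂ) = 0 → z.re < 0 := by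
  have hrh : (τ * η ^ 2 * τ₀) * κ ^ 2 < (η ^ 2 * (τ₀ + τ)) * (η ^ 2 + β * κ ^ 2) := by
    have h1 : 0 < η ^ 2 * κ ^ 2 * (τ₀ * (β - τ) + τ * β) := by
      have : 0 < β - τ := by linarith
      positivity
    have h2 : 0 < η ^ 4 * (τ₀ + τ) := by positivity
    nlinarith [h1, h2]
  have main := aux_rh (τ * η ^ 2 * τ₀) (η ^ 2 * (τ₀ + τ)) (η ^ 2 + β * κ ^ 2) (κ ^ 2)
    (by positivity) (by positivity) (by positivity) (by positivity) hrh
  intro z hz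
  exact main z (by push_cast at hz ⊢; linear_combination hz)
end

section
/- Let N ≥ 1, integers k, ℓ ≥ 0, and c, C₀ > 0. Suppose F: ℝ^N × [0,∞) → [0,∞) satisfies F(ξ,t) ≤ C₀ e^{−c ρ_c(ξ) t} F(ξ,0) with ρ_c(ξ) = |ξ|²/(1+|ξ|²+|ξ|⁴). Then there exists C > 0 such that ∫_{ℝ^N} |ξ|^{2k} F(ξ,t) dξ ≤ C(1+t)^{−N/2−k}(sup_{|ξ|≤1} F(ξ,0)) + C(1+t)^{−ℓ} ∫_{|ξ|≥1} |ξ|^{2(k+ℓ)} F(ξ,0) dξ for all t ≥ 0 (assuming finiteness of the right-hand side). -/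
/-!
Split frequency space at `‖ξ‖ = 1`. There `ρ_c(ξ) ≥ ‖ξ‖² / 3` on the ball and `ρ_c(ξ) ≥ ‖ξ‖⁻² / 3`
outside it, and paying the constant `exp (c / 3)` turns `exp (-c ρ_c t)` into
`exp (-(c / 3) (1 + t) g)` with `g = ‖ξ‖²` resp. `‖ξ‖⁻²`. On the ball this is a Gaussian in `ξ`,
and rescaling by `√(1 + t)` gives the factor `(1 + t) ^ (-N / 2 - k)` in front of its
`‖ξ‖ ^ (2k)`-moment. Outside the ball, `s ^ ℓ exp (-a s) ≤ ℓ! / a ^ ℓ` with `s = ‖ξ‖⁻²`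
trades `ℓ` extra powers of `‖ξ‖²` for the decay `(1 + t) ^ (-ℓ)`.
-/

open MeasureTheory Real Nat Module

noncomputable def cattaneoRate (r : ℝ) : ℝ := r ^ 2 / (1 + r ^ 2 + r ^ 4)

lemma sq_div_three_le_cattaneoRate {r : ℝ} (h0 : 0 ≤ r) (h1 : r ≤ 1) :
    r ^ 2 / 3 ≤ cattaneoRate r := by
  have hr2 : r ^ 2 ≤ 1 := pow_le_one₀ h0 h1
  rw [cattaneoRate, div_le_div_iff₀ (by norm_num) (by positivity)]
  nlinarith [sq_nonneg r, pow_le_one₀ (sq_nonneg r) hr2 (n := 2)]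

lemma inv_sq_div_three_le_cattaneoRate {r : ℝ} (h1 : 1 ≤ r) :
    (r ^ 2)⁻¹ / 3 ≤ cattaneoRate r := by
  have hr2 : 1 ≤ r ^ 2 := one_le_pow₀ h1
  rw [cattaneoRate, ← one_div, div_div, div_le_div_iff₀ (by positivity) (by positivity)]
  nlinarith

lemma exp_neg_mul_le_of_div_three_le {c ρ g t : ℝ} (hc : 0 ≤ c) (ht : 0 ≤ t)
    (hρ : g / 3 ≤ ρ) (hg : g ≤ 1) :
    exp (-c * ρ * t) ≤ exp (c / 3) * exp (-(c / 3 * (1 + t) * g)) := by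
  rw [← exp_add, exp_le_exp]
  nlinarith [mul_le_mul_of_nonneg_left hρ hc, mul_le_mul_of_nonneg_left hg hc]

lemma pow_mul_exp_neg_mul_le (n : ℕ) {a s : ℝ} (ha : 0 < a) (hs : 0 ≤ s) :
    s ^ n * exp (-(a * s)) ≤ n ! / a ^ n := by
  have h := pow_div_factorial_le_exp (a * s) (by positivity) n
  rw [div_le_iff₀ (by positivity), mul_pow] at h
  rw [le_div_iff₀ (by positivity), exp_neg]
  calc s ^ n * (exp (a * s))⁻¹ * a ^ n = a ^ n * s ^ n * (exp (a * s))⁻¹ := by ring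
    _ ≤ exp (a * s) * n ! * (exp (a * s))⁻¹ := by gcongr
    _ = n ! := by field_simp

section Gaussian

variable {V : Type*} [NormedAddCommGroup V] [InnerProductSpace ℝ V] [FiniteDimensional ℝ V]
  [MeasurableSpace V] [BorelSpace V]

lemma integrable_exp_neg_mul_sq_norm {a : ℝ} (ha : 0 < a) :
    Integrable (fun x : V => exp (-(a * ‖x‖ ^ 2))) := by
  refine (GaussianFourier.integrable_cexp_neg_mul_sq_norm_add (b := (a : ℂ)) (by simpa using ha)
    0 (0 : V)).norm.congr (.of_forall fun x => ?_)
  simp [Complex.norm_exp, ← Complex.ofReal_pow]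

lemma integrable_norm_pow_mul_exp_neg_mul_sq_norm (k : ℕ) {a : ℝ} (ha : 0 < a) :
    Integrable (fun x : V => ‖x‖ ^ (2 * k) * exp (-(a * ‖x‖ ^ 2))) := by
  refine ((integrable_exp_neg_mul_sq_norm (V := V) (half_pos ha)).const_mul
    (k ! / (a / 2) ^ k)).mono' (by fun_prop) (.of_forall fun x => ?_)
  have hsplit : exp (-(a * ‖x‖ ^ 2)) = exp (-(a / 2 * ‖x‖ ^ 2)) * exp (-(a / 2 * ‖x‖ ^ 2)) := by
    rw [← exp_add]; ring_nf
  rw [Real.norm_of_nonneg (by positivity), hsplit, pow_mul, ← mul_assoc]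
  gcongr
  exact pow_mul_exp_neg_mul_le k (half_pos ha) (by positivity)

lemma integral_norm_pow_mul_exp_neg_mul_mul_sq_norm (k : ℕ) (b : ℝ) {s : ℝ} (hs : 0 < s) :
    ∫ x : V, ‖x‖ ^ (2 * k) * exp (-(b * s * ‖x‖ ^ 2))
      = s ^ (-(finrank ℝ V : ℝ) / 2 - k) * ∫ x : V, ‖x‖ ^ (2 * k) * exp (-(b * ‖x‖ ^ 2)) := by
  have hR : √s ^ 2 = s := sq_sqrt hs.le
  have hscale : ∀ x : V, ‖√s • x‖ ^ (2 * k) * exp (-(b * ‖√s • x‖ ^ 2))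
      = s ^ k * (‖x‖ ^ (2 * k) * exp (-(b * s * ‖x‖ ^ 2))) := by
    intro x
    rw [norm_smul, norm_of_nonneg (sqrt_nonneg s), mul_pow, pow_mul √s, hR, mul_pow, hR]
    ring_nf
  have hcomp := Measure.integral_comp_smul_of_nonneg (volume : Measure V)
    (fun x : V => ‖x‖ ^ (2 * k) * exp (-(b * ‖x‖ ^ 2))) √s (hR := sqrt_nonneg s)
  simp only [hscale, integral_const_mul, smul_eq_mul] at hcomp
  have hRpow : √s ^ finrank ℝ V = s ^ ((finrank ℝ V : ℝ) / 2) := by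
    rw [sqrt_eq_rpow, ← rpow_natCast, ← rpow_mul hs.le]
    ring_nf
  rw [hRpow] at hcomp
  rw [sub_eq_add_neg, rpow_add hs, neg_div, rpow_neg hs.le, rpow_neg hs.le, rpow_natCast,
    mul_right_comm, ← hcomp]
  field_simp

end Gaussian

section PointwiseBounds

variable {c C₀ t r x y : ℝ}

lemma pow_mul_le_of_le_one (k : ℕ) {M : ℝ} (hc : 0 ≤ c) (hC₀ : 0 ≤ C₀) (ht : 0 ≤ t)
    (hr0 : 0 ≤ r) (hr1 : r ≤ 1) (hy : 0 ≤ y) (hyM : y ≤ M)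
    (hx : x ≤ C₀ * exp (-c * cattaneoRate r * t) * y) :
    r ^ (2 * k) * x ≤ C₀ * exp (c / 3) * M * (r ^ (2 * k) * exp (-(c / 3 * (1 + t) * r ^ 2))) := by
  have hexp := exp_neg_mul_le_of_div_three_le hc ht (sq_div_three_le_cattaneoRate hr0 hr1)
    (pow_le_one₀ hr0 hr1)
  calc r ^ (2 * k) * x
      ≤ r ^ (2 * k) * (C₀ * (exp (c / 3) * exp (-(c / 3 * (1 + t) * r ^ 2))) * M) := by
        gcongr
        exact hx.trans (by gcongr)
    _ = _ := by ring

lemma pow_mul_le_of_one_le (k ℓ : ℕ) (hc : 0 < c) (hC₀ : 0 ≤ C₀) (ht : 0 ≤ t)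
    (hr1 : 1 ≤ r) (hy : 0 ≤ y) (hx : x ≤ C₀ * exp (-c * cattaneoRate r * t) * y) :
    r ^ (2 * k) * x
      ≤ C₀ * exp (c / 3) * (ℓ ! / (c / 3) ^ ℓ) * ((1 + t) ^ ℓ)⁻¹ * (r ^ (2 * (k + ℓ)) * y) := by
  have hr0 : 0 < r := one_pos.trans_le hr1
  have hexp := exp_neg_mul_le_of_div_three_le hc.le ht (inv_sq_div_three_le_cattaneoRate hr1)
    (inv_le_one_of_one_le₀ (one_le_pow₀ hr1))
  have hgain := pow_mul_exp_neg_mul_le ℓ (a := c / 3 * (1 + t)) (s := (r ^ 2)⁻¹) (by positivity)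
    (by positivity)
  have hsplit : r ^ (2 * k) = r ^ (2 * (k + ℓ)) * ((r ^ 2)⁻¹) ^ ℓ := by
    rw [inv_pow, ← pow_mul, mul_add, pow_add, mul_inv_cancel_right₀ (by positivity)]
  calc r ^ (2 * k) * x
      ≤ r ^ (2 * k) * (C₀ * (exp (c / 3) * exp (-(c / 3 * (1 + t) * (r ^ 2)⁻¹))) * y) := by
        gcongr
        exact hx.trans (by gcongr)
    _ = C₀ * exp (c / 3) * (r ^ (2 * (k + ℓ)) * y)
          * (((r ^ 2)⁻¹) ^ ℓ * exp (-(c / 3 * (1 + t) * (r ^ 2)⁻¹))) := by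
        rw [hsplit]; ring
    _ ≤ C₀ * exp (c / 3) * (r ^ (2 * (k + ℓ)) * y) * (ℓ ! / (c / 3 * (1 + t)) ^ ℓ) := by
        gcongr
    _ = _ := by rw [mul_pow]; field_simp

end PointwiseBounds

section FrequencySplitting

variable {V : Type*} [NormedAddCommGroup V] [InnerProductSpace ℝ V] [FiniteDimensional ℝ V]
  [MeasurableSpace V] [BorelSpace V] {F : V → ℝ → ℝ} {c C₀ t : ℝ}

lemma setIntegral_norm_lt_one_le (k : ℕ) {M : ℝ} (hc : 0 < c) (hC₀ : 0 ≤ C₀) (ht : 0 ≤ t)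
    (hF0 : ∀ ξ, 0 ≤ F ξ 0) (hF : ∀ ξ, F ξ t ≤ C₀ * exp (-c * cattaneoRate ‖ξ‖ * t) * F ξ 0)
    (hM : ∀ ξ, ‖ξ‖ ≤ 1 → F ξ 0 ≤ M) (hint : Integrable (fun ξ => ‖ξ‖ ^ (2 * k) * F ξ t)) :
    ∫ ξ in {ξ : V | 1 ≤ ‖ξ‖}ᶜ, ‖ξ‖ ^ (2 * k) * F ξ t
      ≤ C₀ * exp (c / 3) * (∫ ξ : V, ‖ξ‖ ^ (2 * k) * exp (-(c / 3 * ‖ξ‖ ^ 2)))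
          * (1 + t) ^ (-(finrank ℝ V : ℝ) / 2 - k) * M := by
  set G : V → ℝ := fun ξ => ‖ξ‖ ^ (2 * k) * exp (-(c / 3 * (1 + t) * ‖ξ‖ ^ 2))
  have hG : Integrable G := integrable_norm_pow_mul_exp_neg_mul_sq_norm k (by positivity)
  have hS : MeasurableSet {ξ : V | 1 ≤ ‖ξ‖}ᶜ :=
    (measurableSet_le measurable_const measurable_norm).compl
  have hpointwise : ∀ ξ ∈ {ξ : V | 1 ≤ ‖ξ‖}ᶜ,
      ‖ξ‖ ^ (2 * k) * F ξ t ≤ C₀ * exp (c / 3) * M * G ξ := fun ξ hξ =>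
    have hξ1 : ‖ξ‖ ≤ 1 := (not_le.1 (Set.notMem_ofPred_iff.1 hξ)).le
    pow_mul_le_of_le_one k hc.le hC₀ ht (norm_nonneg ξ) hξ1 (hF0 ξ) (hM ξ hξ1) (hF ξ)
  calc ∫ ξ in {ξ : V | 1 ≤ ‖ξ‖}ᶜ, ‖ξ‖ ^ (2 * k) * F ξ t
      ≤ ∫ ξ in {ξ : V | 1 ≤ ‖ξ‖}ᶜ, C₀ * exp (c / 3) * M * G ξ :=
        setIntegral_mono_on hint.integrableOn (hG.const_mul _).integrableOn hS hpointwise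
    _ ≤ C₀ * exp (c / 3) * M * ∫ ξ, G ξ := by
        have hM0 : 0 ≤ M := (hF0 0).trans (hM 0 (by simp))
        rw [integral_const_mul]
        exact mul_le_mul_of_nonneg_left
          (setIntegral_le_integral hG (.of_forall fun ξ => by positivity)) (by positivity)
    _ = _ := by
        rw [integral_norm_pow_mul_exp_neg_mul_mul_sq_norm k _ (by positivity)]
        ring

lemma setIntegral_one_le_norm_le (k ℓ : ℕ) (hc : 0 < c) (hC₀ : 0 ≤ C₀) (ht : 0 ≤ t)
    (hF0 : ∀ ξ, 0 ≤ F ξ 0) (hF : ∀ ξ, F ξ t ≤ C₀ * exp (-c * cattaneoRate ‖ξ‖ * t) * F ξ 0)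
    (hint0 : Integrable (fun ξ => ‖ξ‖ ^ (2 * (k + ℓ)) * F ξ 0))
    (hint : Integrable (fun ξ => ‖ξ‖ ^ (2 * k) * F ξ t)) :
    ∫ ξ in {ξ : V | 1 ≤ ‖ξ‖}, ‖ξ‖ ^ (2 * k) * F ξ t
      ≤ C₀ * exp (c / 3) * (ℓ ! / (c / 3) ^ ℓ) * (1 + t) ^ (-(ℓ : ℝ))
          * ∫ ξ in {ξ : V | 1 ≤ ‖ξ‖}, ‖ξ‖ ^ (2 * (k + ℓ)) * F ξ 0 := by
  have hS : MeasurableSet {ξ : V | 1 ≤ ‖ξ‖} := measurableSet_le measurable_const measurable_norm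
  rw [rpow_neg (by linarith), rpow_natCast, ← integral_const_mul]
  exact setIntegral_mono_on hint.integrableOn (hint0.const_mul _).integrableOn hS
    fun ξ hξ => pow_mul_le_of_one_le k ℓ hc hC₀ ht hξ (hF0 ξ) (hF ξ)

end FrequencySplitting

theorem stmt_15_general (N : ℕ) (k ℓ : ℕ) (c C₀ : ℝ) (hc : 0 < c) (hC₀ : 0 < C₀)
    (F : EuclideanSpace ℝ (Fin N) → ℝ → ℝ)
    (hFnonneg : ∀ ξ t, 0 ≤ t → 0 ≤ F ξ t)
    (hF : ∀ ξ t, 0 ≤ t →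
      F ξ t ≤ C₀ * Real.exp (-c * (‖ξ‖ ^ 2 / (1 + ‖ξ‖ ^ 2 + ‖ξ‖ ^ 4)) * t) * F ξ 0)
    (hbdd : BddAbove ((fun ξ => F ξ 0) '' Metric.closedBall 0 1))
    (hint : Integrable (fun ξ => ‖ξ‖ ^ (2 * (k + ℓ)) * F ξ 0))
    (hintt : ∀ t, 0 ≤ t → Integrable (fun ξ => ‖ξ‖ ^ (2 * k) * F ξ t)) :
    ∃ C > (0 : ℝ), ∀ t : ℝ, 0 ≤ t →
      ∫ ξ, ‖ξ‖ ^ (2 * k) * F ξ t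
        ≤ C * (1 + t) ^ (-(N : ℝ) / 2 - k) *
            sSup ((fun ξ => F ξ 0) '' Metric.closedBall 0 1)
          + C * (1 + t) ^ (-(ℓ : ℝ)) *
            ∫ ξ in {ξ : EuclideanSpace ℝ (Fin N) | 1 ≤ ‖ξ‖},
              ‖ξ‖ ^ (2 * (k + ℓ)) * F ξ 0 := by
  set M := sSup ((fun ξ => F ξ 0) '' Metric.closedBall 0 1)
  have hM : ∀ ξ : EuclideanSpace ℝ (Fin N), ‖ξ‖ ≤ 1 → F ξ 0 ≤ M := fun ξ hξ =>
    le_csSup hbdd ⟨ξ, by simpa using hξ, rfl⟩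
  set K₁ := C₀ * exp (c / 3) *
    ∫ ξ : EuclideanSpace ℝ (Fin N), ‖ξ‖ ^ (2 * k) * exp (-(c / 3 * ‖ξ‖ ^ 2))
  set K₂ := C₀ * exp (c / 3) * (ℓ ! / (c / 3) ^ ℓ)
  have hK₂ : 0 < K₂ := by positivity
  refine ⟨max K₁ K₂, lt_max_of_lt_right hK₂, fun t ht => ?_⟩
  have hF0 : ∀ ξ, 0 ≤ F ξ 0 := fun ξ => hFnonneg ξ 0 le_rfl
  have hlow := setIntegral_norm_lt_one_le k hc hC₀.le ht hF0 (fun ξ => hF ξ t ht) hM (hintt t ht)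
  have hhigh := setIntegral_one_le_norm_le k ℓ hc hC₀.le ht hF0 (fun ξ => hF ξ t ht) hint
    (hintt t ht)
  rw [finrank_euclideanSpace_fin] at hlow
  rw [← integral_add_compl (measurableSet_le measurable_const measurable_norm) (hintt t ht),
    add_comm]
  have hM0 : 0 ≤ M := (hF0 0).trans (hM 0 (by simp))
  have hJ0 : 0 ≤ ∫ ξ in {ξ : EuclideanSpace ℝ (Fin N) | 1 ≤ ‖ξ‖}, ‖ξ‖ ^ (2 * (k + ℓ)) * F ξ 0 :=
    setIntegral_nonneg (measurableSet_le measurable_const measurable_norm) fun ξ _ =>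
      mul_nonneg (by positivity) (hF0 ξ)
  gcongr
  · exact hlow.trans (by gcongr; exact le_max_left _ _)
  · exact hhigh.trans (by gcongr; exact le_max_right _ _)

theorem stmt_15 (N : ℕ) (hN : 1 ≤ N) (k ℓ : ℕ) (c C₀ : ℝ) (hc : 0 < c) (hC₀ : 0 < C₀)
    (F : EuclideanSpace ℝ (Fin N) → ℝ → ℝ)
    (hFnonneg : ∀ ξ t, 0 ≤ t → 0 ≤ F ξ t)
    (hF : ∀ ξ t, 0 ≤ t →
      F ξ t ≤ C₀ * Real.exp (-c * (‖ξ‖ ^ 2 / (1 + ‖ξ‖ ^ 2 + ‖ξ‖ ^ 4)) * t) * F ξ 0)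
    (hbdd : BddAbove ((fun ξ => F ξ 0) '' Metric.closedBall 0 1))
    (hint : Integrable (fun ξ => ‖ξ‖ ^ (2 * (k + ℓ)) * F ξ 0))
    (hintt : ∀ t, 0 ≤ t → Integrable (fun ξ => ‖ξ‖ ^ (2 * k) * F ξ t)) :
    ∃ C > (0 : ℝ), ∀ t : ℝ, 0 ≤ t →
      ∫ ξ, ‖ξ‖ ^ (2 * k) * F ξ t
        ≤ C * (1 + t) ^ (-(N : ℝ) / 2 - k) *
            sSup ((fun ξ => F ξ 0) '' Metric.closedBall 0 1)
          + C * (1 + t) ^ (-(ℓ : ℝ)) *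
            ∫ ξ in {ξ : EuclideanSpace ℝ (Fin N) | 1 ≤ ‖ξ‖},
              ‖ξ‖ ^ (2 * (k + ℓ)) * F ξ 0 :=
  stmt_15_general N k ℓ c C₀ hc hC₀ F hFnonneg hF hbdd hint hintt
end

section
/- Let τ, β, η > 0 with 0 < η < 1/2 and τ < β, and assume (β+η²)² > 4τη². Then the four roots of the quartic q(μ;ν) = τμ⁴ + (ν²−τ)μ³ + (η²τ − (β+1)ν²)μ² + (η²+β−ν²)ν²μ + ν⁴ admit, as ν → 0, the expansions μ_{1,2}(ν) = −[(β+η²) ∓ √((β+η²)²−4τη²)]/(2τη²) · ν² + O(ν³) and μ_{3,4}(ν) = (1 ∓ √(1−4η²))/2 + O(ν). -/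
/-!
At `ν = 0` the quartic factors as `q(μ; 0) = τ μ² (μ² - μ + η²)`. Its two nonzero roots
`(1 ∓ √(1 - 4η²))/2` are simple, so by the implicit function theorem they persist as roots of
`q(·; ν)` up to an error `O(ν)`. The double root at `0` splits: substituting `μ = ν² w` gives
`q(ν² w; ν) = ν⁴ r(ν², w)` with `r(0, w) = τη² w² + (β + η²) w + 1`, whose roots `-γ₁, -γ₂` are
simple because `(β + η²)² > 4τη²`. The implicit function theorem applied to `r` gives roots
`w = -γ + O(ν²)`, i.e. `μ = -γ ν² + O(ν⁴)`.
-/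

open Filter Topology Asymptotics

section ImplicitRoot

variable {𝕜 E : Type*} [RCLike 𝕜] [NormedAddCommGroup E] [NormedSpace 𝕜 E] [CompleteSpace E]

theorem exists_implicit_root_of_hasDerivAt {f : E × 𝕜 → 𝕜} {x₀ : E} {w₀ d : 𝕜}
    (hf : ContDiffAt 𝕜 1 f (x₀, w₀)) (hroot : f (x₀, w₀) = 0)
    (hd : HasDerivAt (fun w => f (x₀, w)) d w₀) (hd₀ : d ≠ 0) :
    ∃ ψ : E → 𝕜, (∀ᶠ x in 𝓝 x₀, f (x, ψ x) = 0) ∧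
      (fun x => ψ x - w₀) =O[𝓝 x₀] (fun x => x - x₀) := by
  have hf' := hf.hasStrictFDerivAt one_ne_zero
  have hpartial : fderiv 𝕜 f (x₀, w₀) ∘L .inr 𝕜 E 𝕜 =
      (ContinuousLinearEquiv.unitsEquivAut 𝕜 (Units.mk0 d hd₀) : 𝕜 →L[𝕜] 𝕜) := by
    refine ContinuousLinearMap.ext_ring ?_
    have := (hf'.hasFDerivAt.comp w₀ (hasFDerivAt_prodMk_right x₀ w₀)).hasDerivAt
    simpa using (hd.unique this).symm
  have hinv : (fderiv 𝕜 f (x₀, w₀) ∘L .inr 𝕜 E 𝕜).IsInvertible := hpartial ▸ ⟨_, rfl⟩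
  have hψ₀ := (hf'.eventually_apply_eq_iff_implicitFunctionOfProdDomain hinv).self_of_nhds.mp rfl
  refine ⟨hf'.implicitFunctionOfProdDomain hinv, ?_, ?_⟩
  · simpa [hroot] using hf'.eventually_apply_implicitFunctionOfProdDomain hinv
  · simpa [hψ₀] using
      (hf'.hasStrictFDerivAt_implicitFunctionOfProdDomain hinv).hasFDerivAt.isBigO_sub

theorem hasDerivAt_mul_sub_self {g : 𝕜 → 𝕜} {a : 𝕜} (hg : DifferentiableAt 𝕜 g a) :
    HasDerivAt (fun x => g x * (x - a)) (g a) a :=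
  (hg.hasDerivAt.fun_mul ((hasDerivAt_id' a).sub_const a)).congr_deriv (by simp)

end ImplicitRoot

theorem vieta_quadratic_formula {a b c : ℝ} (ha : a ≠ 0) (hdisc : 4 * a * c < b ^ 2) :
    a * ((b - √(b ^ 2 - 4 * a * c)) / (2 * a) + (b + √(b ^ 2 - 4 * a * c)) / (2 * a)) = b ∧
    a * ((b - √(b ^ 2 - 4 * a * c)) / (2 * a) * ((b + √(b ^ 2 - 4 * a * c)) / (2 * a))) = c ∧
    (b - √(b ^ 2 - 4 * a * c)) / (2 * a) ≠ (b + √(b ^ 2 - 4 * a * c)) / (2 * a) := by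
  have hs : √(b ^ 2 - 4 * a * c) ^ 2 = b ^ 2 - 4 * a * c := Real.sq_sqrt (by linarith)
  have hs₀ : 0 < √(b ^ 2 - 4 * a * c) := Real.sqrt_pos.mpr (by linarith)
  generalize √(b ^ 2 - 4 * a * c) = s at hs hs₀ ⊢
  refine ⟨by field_simp; ring, by field_simp; linear_combination -hs, ?_⟩
  rw [Ne, div_left_inj' (mul_ne_zero two_ne_zero ha)]
  linarith

/-- The quartic `q(μ; ν)`, written `slsQuartic τ β η ν μ`. -/
def slsQuartic (τ β η : ℝ) (ν μ : ℂ) : ℂ :=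
  (τ : ℂ) * μ ^ 4 + (ν ^ 2 - τ) * μ ^ 3
    + ((η : ℂ) ^ 2 * τ - ((β : ℂ) + 1) * ν ^ 2) * μ ^ 2
    + ((η : ℂ) ^ 2 + β - ν ^ 2) * ν ^ 2 * μ + ν ^ 4

/-- The rescaled quartic `r(ε, w)`. -/
def slsQuarticScaled (τ β η : ℝ) (ε w : ℂ) : ℂ :=
  τ * ε ^ 2 * w ^ 4 + (ε - τ) * ε * w ^ 3 + ((η : ℂ) ^ 2 * τ - ((β : ℂ) + 1) * ε) * w ^ 2
    + ((η : ℂ) ^ 2 + β - ε) * w + 1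

theorem slsQuartic_sq_mul (τ β η : ℝ) (ν w : ℂ) :
    slsQuartic τ β η ν (ν ^ 2 * w) = ν ^ 4 * slsQuarticScaled τ β η (ν ^ 2) w := by
  unfold slsQuartic slsQuarticScaled; ring

section SlsQuartic

variable {τ β η : ℝ}

theorem exists_slsQuartic_root_sub_isBigO {r r' : ℝ} (hτ : τ ≠ 0) (hη : η ≠ 0)
    (hsum : r + r' = 1) (hprod : r * r' = η ^ 2) (hne : r ≠ r') :
    ∃ ψ : ℂ → ℂ, (∀ᶠ ν in 𝓝 0, slsQuartic τ β η ν (ψ ν) = 0) ∧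
      (fun ν => ψ ν - r) =O[𝓝 0] (fun ν => ν) := by
  have hr : r ≠ 0 := left_ne_zero_of_mul (hprod ▸ pow_ne_zero 2 hη)
  have hslice : (fun μ => slsQuartic τ β η 0 μ) = fun μ : ℂ => τ * μ ^ 2 * (μ - r') * (μ - r) := by
    funext μ
    have hsumC : (r : ℂ) + r' = 1 := by exact_mod_cast hsum
    have hprodC : (r : ℂ) * r' = η ^ 2 := by exact_mod_cast hprod
    simp only [slsQuartic]
    linear_combination (τ * μ ^ 3 : ℂ) * hsumC - (τ * μ ^ 2 : ℂ) * hprodC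
  have hd := hasDerivAt_mul_sub_self (g := fun μ : ℂ => τ * μ ^ 2 * (μ - r')) (a := r)
    (by fun_prop)
  rw [← hslice] at hd
  simpa using exists_implicit_root_of_hasDerivAt
    (f := fun p : ℂ × ℂ => slsQuartic τ β η p.1 p.2) (by unfold slsQuartic; fun_prop)
    (by simpa using congrFun hslice r) hd (by simp [hτ, hr, sub_eq_zero, hne])

theorem exists_slsQuartic_root_add_mul_sq_isBigO {γ γ' : ℝ}
    (hsum : τ * η ^ 2 * (γ + γ') = β + η ^ 2) (hprod : τ * η ^ 2 * (γ * γ') = 1) (hne : γ ≠ γ') :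
    ∃ ψ : ℂ → ℂ, (∀ᶠ ν in 𝓝 0, slsQuartic τ β η ν (ψ ν) = 0) ∧
      (fun ν => ψ ν + γ * ν ^ 2) =O[𝓝 0] (fun ν => ν ^ 4) := by
  have ha : τ * η ^ 2 ≠ 0 := left_ne_zero_of_mul (hprod ▸ one_ne_zero)
  have hslice : (fun w => slsQuarticScaled τ β η 0 w) =
      fun w : ℂ => τ * η ^ 2 * (w + γ') * (w - (-γ : ℝ)) := by
    funext w
    have hsumC : (τ : ℂ) * η ^ 2 * (γ + γ') = β + η ^ 2 := by exact_mod_cast hsum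
    have hprodC : (τ : ℂ) * η ^ 2 * (γ * γ') = 1 := by exact_mod_cast hprod
    simp only [slsQuarticScaled]
    push_cast
    linear_combination (-w) * hsumC - hprodC
  have hd := hasDerivAt_mul_sub_self (g := fun w : ℂ => τ * η ^ 2 * (w + γ')) (a := (-γ : ℝ))
    (by fun_prop)
  rw [← hslice] at hd
  obtain ⟨φ, hroot, hO⟩ := exists_implicit_root_of_hasDerivAt
    (f := fun p : ℂ × ℂ => slsQuarticScaled τ β η p.1 p.2) (by unfold slsQuarticScaled; fun_prop)
    (by simpa using congrFun hslice (-γ : ℝ)) hd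
    (mul_ne_zero (by exact_mod_cast ha)
      (by push_cast; rw [neg_add_eq_sub, sub_ne_zero]; exact_mod_cast hne.symm))
  have hsq : Tendsto (fun ν : ℂ => ν ^ 2) (𝓝 0) (𝓝 0) := by
    simpa using (continuous_pow 2).tendsto (0 : ℂ)
  refine ⟨fun ν => ν ^ 2 * φ (ν ^ 2), ?_, ?_⟩
  · filter_upwards [hsq.eventually hroot] with ν hν
    rw [slsQuartic_sq_mul, hν, mul_zero]
  · have := (isBigO_refl (fun ν : ℂ => ν ^ 2) (𝓝 0)).mul (hO.comp_tendsto hsq)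
    simpa [← pow_add, mul_add, mul_comm] using this

end SlsQuartic

theorem stmt_17_general (τ β η : ℝ) (hτ : 0 < τ) (hη : 0 < η) (hη' : η < 1 / 2)
    (hdisc : (β + η ^ 2) ^ 2 > 4 * τ * η ^ 2) :
    let Q : ℂ → ℂ → ℂ := fun m ν =>
      (τ : ℂ) * m ^ 4 + (ν ^ 2 - τ) * m ^ 3
        + ((η : ℂ) ^ 2 * τ - ((β : ℂ) + 1) * ν ^ 2) * m ^ 2
        + ((η : ℂ) ^ 2 + β - ν ^ 2) * ν ^ 2 * m + ν ^ 4
    ∃ δ > (0 : ℝ), ∃ C > (0 : ℝ), ∃ m₁ m₂ m₃ m₄ : ℂ → ℂ,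
      ∀ ν : ℂ, ‖ν‖ ≤ δ →
        (Q (m₁ ν) ν = 0 ∧ Q (m₂ ν) ν = 0 ∧ Q (m₃ ν) ν = 0 ∧ Q (m₄ ν) ν = 0) ∧
        ‖m₁ ν + ((((β + η ^ 2) - Real.sqrt ((β + η ^ 2) ^ 2 - 4 * τ * η ^ 2))
            / (2 * τ * η ^ 2) : ℝ) : ℂ) * ν ^ 2‖ ≤ C * ‖ν‖ ^ 3 ∧
        ‖m₂ ν + ((((β + η ^ 2) + Real.sqrt ((β + η ^ 2) ^ 2 - 4 * τ * η ^ 2))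
            / (2 * τ * η ^ 2) : ℝ) : ℂ) * ν ^ 2‖ ≤ C * ‖ν‖ ^ 3 ∧
        ‖m₃ ν - (((1 - Real.sqrt (1 - 4 * η ^ 2)) / 2 : ℝ) : ℂ)‖ ≤ C * ‖ν‖ ∧
        ‖m₄ ν - (((1 + Real.sqrt (1 - 4 * η ^ 2)) / 2 : ℝ) : ℂ)‖ ≤ C * ‖ν‖ := by
  intro Q
  obtain ⟨hγsum, hγprod, hγne⟩ :=
    vieta_quadratic_formula (a := τ * η ^ 2) (b := β + η ^ 2) (c := 1) (by positivity) (by linarith)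
  rw [mul_one, ← mul_assoc 4 τ, ← mul_assoc 2 τ] at hγsum hγprod hγne
  obtain ⟨hrsum, hrprod, hrne⟩ :=
    vieta_quadratic_formula (a := 1) (b := 1) (c := η ^ 2) one_ne_zero (by nlinarith)
  simp only [one_pow, mul_one, one_mul] at hrsum hrprod hrne
  obtain ⟨m₁, hQ₁, hO₁⟩ := exists_slsQuartic_root_add_mul_sq_isBigO hγsum hγprod hγne
  obtain ⟨m₂, hQ₂, hO₂⟩ := exists_slsQuartic_root_add_mul_sq_isBigO (τ := τ) (β := β) (η := η)
    (by linear_combination hγsum) (by linear_combination hγprod) hγne.symm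
  obtain ⟨m₃, hQ₃, hO₃⟩ :=
    exists_slsQuartic_root_sub_isBigO (β := β) hτ.ne' hη.ne' hrsum hrprod hrne
  obtain ⟨m₄, hQ₄, hO₄⟩ := exists_slsQuartic_root_sub_isBigO (β := β) hτ.ne' hη.ne'
    (by linear_combination hrsum) (by linear_combination hrprod) hrne.symm
  have hν₄ : (fun ν : ℂ => ν ^ 4) =O[𝓝 0] (fun ν => ν ^ 3) :=
    (isLittleO_pow_pow (by norm_num)).isBigO
  obtain ⟨c₁, hc₁, hB₁⟩ := (hO₁.trans hν₄).exists_pos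
  obtain ⟨c₂, hc₂, hB₂⟩ := (hO₂.trans hν₄).exists_pos
  obtain ⟨c₃, hc₃, hB₃⟩ := hO₃.exists_pos
  obtain ⟨c₄, hc₄, hB₄⟩ := hO₄.exists_pos
  set C := max (max c₁ c₂) (max c₃ c₄)
  have hev := hQ₁.and <| hQ₂.and <| hQ₃.and <| hQ₄.and <|
    (hB₁.weaken (show c₁ ≤ C by simp [C])).bound.and <|
    (hB₂.weaken (show c₂ ≤ C by simp [C])).bound.and <|
    (hB₃.weaken (show c₃ ≤ C by simp [C])).bound.and <|
    (hB₄.weaken (show c₄ ≤ C by simp [C])).bound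
  obtain ⟨δ, hδ, hball⟩ := Metric.nhds_basis_closedBall.eventually_iff.mp hev
  refine ⟨δ, hδ, C, by positivity, m₁, m₂, m₃, m₄, fun ν hν => ?_⟩
  obtain ⟨r₁, r₂, r₃, r₄, b₁, b₂, b₃, b₄⟩ := hball (by simpa using hν)
  exact ⟨⟨r₁, r₂, r₃, r₄⟩, by simpa using b₁, by simpa using b₂, b₃, b₄⟩

theorem stmt_17 (τ β η : ℝ) (hτ : 0 < τ) (hβ : 0 < β) (hη : 0 < η) (hη' : η < 1 / 2)
    (hτβ : τ < β) (hdisc : (β + η ^ 2) ^ 2 > 4 * τ * η ^ 2) :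
    let Q : ℂ → ℂ → ℂ := fun m ν =>
      (τ : ℂ) * m ^ 4 + (ν ^ 2 - τ) * m ^ 3
        + ((η : ℂ) ^ 2 * τ - ((β : ℂ) + 1) * ν ^ 2) * m ^ 2
        + ((η : ℂ) ^ 2 + β - ν ^ 2) * ν ^ 2 * m + ν ^ 4
    ∃ δ > (0 : ℝ), ∃ C > (0 : ℝ), ∃ m₁ m₂ m₃ m₄ : ℂ → ℂ,
      ∀ ν : ℂ, ‖ν‖ ≤ δ →
        (Q (m₁ ν) ν = 0 ∧ Q (m₂ ν) ν = 0 ∧ Q (m₃ ν) ν = 0 ∧ Q (m₄ ν) ν = 0) ∧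
        ‖m₁ ν + ((((β + η ^ 2) - Real.sqrt ((β + η ^ 2) ^ 2 - 4 * τ * η ^ 2))
            / (2 * τ * η ^ 2) : ℝ) : ℂ) * ν ^ 2‖ ≤ C * ‖ν‖ ^ 3 ∧
        ‖m₂ ν + ((((β + η ^ 2) + Real.sqrt ((β + η ^ 2) ^ 2 - 4 * τ * η ^ 2))
            / (2 * τ * η ^ 2) : ℝ) : ℂ) * ν ^ 2‖ ≤ C * ‖ν‖ ^ 3 ∧
        ‖m₃ ν - (((1 - Real.sqrt (1 - 4 * η ^ 2)) / 2 : ℝ) : ℂ)‖ ≤ C * ‖ν‖ ∧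
        ‖m₄ ν - (((1 + Real.sqrt (1 - 4 * η ^ 2)) / 2 : ℝ) : ℂ)‖ ≤ C * ‖ν‖ :=
  stmt_17_general τ β η hτ hη hη' hdisc
end

section
/- Let τ > 0, η > 0 and consider, for small ζ ∈ ℂ, the quartic τλ⁴ + (1−τζ²)λ³ + (τη²ζ² − τ − 1)ζ²λ² + ((η²+τ)ζ²−1)ζ²λ + ζ⁴ (the Fourier-coupled characteristic polynomial with β = τ). Its roots admit the expansions λ_{1,2}(ζ) = ±ζ ∓ (η²/2)ζ³ − (η²/2)ζ⁴ + O(ζ⁵), λ₃(ζ) = ζ² + O(ζ³), λ₄(ζ) = −1/τ + O(ζ²). Hence with ζ = i|ξ|, Re λ_{1,2}(ξ) = −(η²/2)|ξ|⁴ + O(|ξ|⁵), Re λ₃(ξ) = −|ξ|² + O(|ξ|³), Re λ₄(ξ) = −1/τ + O(|ξ|²), all negative for small |ξ| ≠ 0. -/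
/-! With `κ = η²` the quartic factors as `(τ λ + 1) · ((λ - ζ²)(λ - ζ)(λ + ζ) + κ ζ⁴ λ)`, so
`λ₄ = -1/τ` exactly and the other three roots are those of a perturbed cubic. The perturbation
has size at most `|κ| |ζ|⁵` at the points `±ζ, ζ²`, which are more than `|ζ|/2` apart, so each
of them carries its own root within `|ζ|/4`. At a sharper approximation `w` of a root, dividing
the value of the cubic by the distances from `w` to the two other roots bounds the error. The
cubic is even in `ζ`, so `λ₂(ζ) = λ₁(-ζ)`. On `ζ = i x` the approximations have real parts
`-(η²/2) x⁴`, `-x²` and `-1/τ`, which dominate the error terms for small `x ≠ 0`. -/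

theorem exists_quadratic_factorization (b c : ℂ) :
    ∃ u v : ℂ, ∀ z : ℂ, z ^ 2 + b * z + c = (z - u) * (z - v) := by
  obtain ⟨s, hs⟩ := IsAlgClosed.exists_pow_nat_eq (b ^ 2 - 4 * c) two_pos
  exact ⟨(-b + s) / 2, (-b - s) / 2, fun z => by linear_combination (1 / 4 : ℂ) * hs⟩

theorem exists_cubic_factorization (p q r : ℂ) :
    ∃ a b c : ℂ, ∀ z : ℂ, z ^ 3 + p * z ^ 2 + q * z + r = (z - a) * (z - b) * (z - c) := by
  open Polynomial in
  have hdeg : (X ^ 3 + C p * X ^ 2 + C q * X + C r).degree = 3 := by compute_degree!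
  obtain ⟨a, ha⟩ := Complex.exists_root (f := X ^ 3 + C p * X ^ 2 + C q * X + C r)
    (by rw [hdeg]; norm_num)
  have ha : a ^ 3 + p * a ^ 2 + q * a + r = 0 := by simpa using ha
  obtain ⟨u, v, huv⟩ := exists_quadratic_factorization (p + a) (q + a * (p + a))
  exact ⟨a, u, v, fun z => by linear_combination (z - a) * huv z + ha⟩

section Seminormed

variable {E : Type*} [SeminormedAddCommGroup E] {u v r : E} {ρ : ℝ}

theorem norm_sub_le_two_mul_of_norm_sub_le (hu : ‖u - r‖ ≤ ρ) (hv : ‖v - r‖ ≤ ρ) :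
    ‖u - v‖ ≤ 2 * ρ := by
  have := norm_sub_le_norm_sub_add_norm_sub u r v
  rw [norm_sub_rev r v] at this
  linarith

theorem sub_le_norm_sub_of_norm_sub_le (h : ‖v - r‖ ≤ ρ) :
    ‖u - v‖ - ρ ≤ ‖u - r‖ := by
  have := norm_sub_le_norm_sub_add_norm_sub u r v
  rw [norm_sub_rev r v] at this
  linarith

end Seminormed

section CubicRoots

variable {𝕜 : Type*} [NormedField 𝕜] {a b c w : 𝕜} {ρ : ℝ}

theorem exists_root_near_of_norm_lt (h : ‖(w - a) * (w - b) * (w - c)‖ < ρ ^ 3) :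
    ‖w - a‖ ≤ ρ ∨ ‖w - b‖ ≤ ρ ∨ ‖w - c‖ ≤ ρ := by
  by_contra! hfar
  obtain ⟨ha, hb, hc⟩ := hfar
  have hρ : 0 ≤ ρ := by
    by_contra! hρ
    nlinarith [norm_nonneg ((w - a) * (w - b) * (w - c)), pow_pos (neg_pos.mpr hρ) 3]
  rw [norm_mul, norm_mul] at h
  have : ρ ^ 3 ≤ ‖w - a‖ * ‖w - b‖ * ‖w - c‖ := by
    rw [pow_three, ← mul_assoc]; gcongr
  linarith

theorem exists_factorization_root_near {f : 𝕜 → 𝕜} (hf : ∀ z, f z = (z - a) * (z - b) * (z - c))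
    (hw : ‖f w‖ < ρ ^ 3) :
    ∃ a' b' c' : 𝕜, (∀ z, f z = (z - a') * (z - b') * (z - c')) ∧ ‖w - a'‖ ≤ ρ := by
  rw [hf] at hw
  rcases exists_root_near_of_norm_lt hw with h | h | h
  · exact ⟨a, b, c, hf, h⟩
  · exact ⟨b, a, c, fun z => by rw [hf]; ring, h⟩
  · exact ⟨c, a, b, fun z => by rw [hf]; ring, h⟩

theorem exists_factorization_roots_near {f : 𝕜 → 𝕜}
    (hf : ∀ z, f z = (z - a) * (z - b) * (z - c)) {w₁ w₂ w₃ : 𝕜}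
    (h₁ : ‖f w₁‖ < ρ ^ 3) (h₂ : ‖f w₂‖ < ρ ^ 3) (h₃ : ‖f w₃‖ < ρ ^ 3)
    (h₁₂ : 2 * ρ < ‖w₁ - w₂‖) (h₁₃ : 2 * ρ < ‖w₁ - w₃‖) (h₂₃ : 2 * ρ < ‖w₂ - w₃‖) :
    ∃ r₁ r₂ r₃ : 𝕜, (∀ z, f z = (z - r₁) * (z - r₂) * (z - r₃)) ∧
      ‖w₁ - r₁‖ ≤ ρ ∧ ‖w₂ - r₂‖ ≤ ρ ∧ ‖w₃ - r₃‖ ≤ ρ := by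
  obtain ⟨r₁, b, c, hf, hr₁⟩ := exists_factorization_root_near hf h₁
  obtain ⟨r₂, r₃, hf, hr₂⟩ : ∃ r₂ r₃ : 𝕜,
      (∀ z, f z = (z - r₁) * (z - r₂) * (z - r₃)) ∧ ‖w₂ - r₂‖ ≤ ρ := by
    rw [hf] at h₂
    rcases exists_root_near_of_norm_lt h₂ with h | h | h
    · exact absurd (norm_sub_le_two_mul_of_norm_sub_le hr₁ h) h₁₂.not_ge
    · exact ⟨b, c, hf, h⟩
    · exact ⟨c, b, fun z => by rw [hf]; ring, h⟩
  rw [hf] at h₃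
  rcases exists_root_near_of_norm_lt h₃ with h | h | h
  · exact absurd (norm_sub_le_two_mul_of_norm_sub_le hr₁ h) h₁₃.not_ge
  · exact absurd (norm_sub_le_two_mul_of_norm_sub_le hr₂ h) h₂₃.not_ge
  · exact ⟨r₁, r₂, r₃, hf, hr₁, hr₂, h⟩

theorem norm_sub_le_div_of_le_norm_sub {r₁ r₂ r₃ : 𝕜} {d₂ d₃ : ℝ} (hd₂ : 0 < d₂) (hd₃ : 0 < d₃)
    (h₂ : d₂ ≤ ‖w - r₂‖) (h₃ : d₃ ≤ ‖w - r₃‖) :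
    ‖w - r₁‖ ≤ ‖(w - r₁) * (w - r₂) * (w - r₃)‖ / (d₂ * d₃) := by
  rw [le_div_iff₀ (by positivity), norm_mul, norm_mul, mul_assoc]
  gcongr

end CubicRoots

def reducedCubic (κ ζ z : ℂ) : ℂ := (z - ζ ^ 2) * (z - ζ) * (z + ζ) + κ * ζ ^ 4 * z

noncomputable def approxRoot (κ ζ : ℂ) : ℂ := ζ - κ / 2 * ζ ^ 3 - κ / 2 * ζ ^ 4

namespace reducedCubic

variable {κ ζ : ℂ}

theorem neg_param (κ ζ z : ℂ) : reducedCubic κ (-ζ) z = reducedCubic κ ζ z := by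
  unfold reducedCubic; ring

theorem exists_factorization (κ ζ : ℂ) :
    ∃ a b c : ℂ, ∀ z, reducedCubic κ ζ z = (z - a) * (z - b) * (z - c) := by
  obtain ⟨a, b, c, h⟩ := exists_cubic_factorization (-ζ ^ 2) ((κ * ζ ^ 2 - 1) * ζ ^ 2) (ζ ^ 4)
  exact ⟨a, b, c, fun z => by rw [← h]; unfold reducedCubic; ring⟩

theorem norm_apply_self : ‖reducedCubic κ ζ ζ‖ = ‖κ‖ * ‖ζ‖ ^ 5 := by
  rw [show reducedCubic κ ζ ζ = κ * ζ ^ 5 by unfold reducedCubic; ring, norm_mul, norm_pow]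

theorem norm_apply_neg_self : ‖reducedCubic κ ζ (-ζ)‖ = ‖κ‖ * ‖ζ‖ ^ 5 := by
  rw [show reducedCubic κ ζ (-ζ) = -(κ * ζ ^ 5) by unfold reducedCubic; ring,
    norm_neg, norm_mul, norm_pow]

theorem norm_apply_sq : ‖reducedCubic κ ζ (ζ ^ 2)‖ = ‖κ‖ * ‖ζ‖ ^ 6 := by
  rw [show reducedCubic κ ζ (ζ ^ 2) = κ * ζ ^ 6 by unfold reducedCubic; ring, norm_mul, norm_pow]

theorem apply_approxRoot :
    reducedCubic κ ζ (approxRoot κ ζ) = κ * ζ ^ 7 + κ * ζ ^ 5 * (ζ - approxRoot κ ζ)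
      + (ζ - ζ ^ 2 - (ζ - approxRoot κ ζ)) * (ζ - approxRoot κ ζ) ^ 2 := by
  unfold reducedCubic approxRoot; ring

theorem norm_sub_approxRoot_le (hs : ‖ζ‖ ≤ 1) : ‖ζ - approxRoot κ ζ‖ ≤ ‖κ‖ * ‖ζ‖ ^ 3 := by
  have h : ζ - approxRoot κ ζ = κ / 2 * (ζ ^ 3 + ζ ^ 4) := by unfold approxRoot; ring
  have h34 : ‖ζ ^ 3 + ζ ^ 4‖ ≤ 2 * ‖ζ‖ ^ 3 := by
    refine (norm_add_le _ _).trans ?_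
    rw [norm_pow, norm_pow]
    nlinarith [pow_le_pow_of_le_one (norm_nonneg ζ) hs (show 3 ≤ 4 by norm_num)]
  calc ‖ζ - approxRoot κ ζ‖ ≤ ‖κ‖ / 2 * (2 * ‖ζ‖ ^ 3) := by
        rw [h, norm_mul, norm_div, Complex.norm_ofNat]; gcongr
    _ = ‖κ‖ * ‖ζ‖ ^ 3 := by ring

section Small

variable {r₁ r₂ r₃ : ℂ} (hs : ‖ζ‖ ≤ 1 / 8) (hκ : ‖κ‖ * ‖ζ‖ < 1 / 8)
include hs

theorem le_norm_sub_sq : 7 / 8 * ‖ζ‖ ≤ ‖ζ - ζ ^ 2‖ := by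
  have := norm_sub_norm_le ζ (ζ ^ 2)
  rw [norm_pow] at this
  nlinarith [norm_nonneg ζ]

theorem norm_sq_sub_root_le (hζ : ζ ≠ 0)
    (hf : ∀ z, reducedCubic κ ζ z = (z - r₁) * (z - r₂) * (z - r₃))
    (h₁ : ‖ζ - r₁‖ ≤ ‖ζ‖ / 4) (h₂ : ‖-ζ - r₂‖ ≤ ‖ζ‖ / 4) :
    ‖ζ ^ 2 - r₃‖ ≤ 4 * ‖κ‖ * ‖ζ‖ ^ 4 := by
  have hs0 : 0 < ‖ζ‖ := norm_pos_iff.mpr hζ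
  have hd₁ : ‖ζ‖ / 2 ≤ ‖ζ ^ 2 - r₁‖ := by
    have := sub_le_norm_sub_of_norm_sub_le (u := ζ ^ 2) h₁
    rw [norm_sub_rev] at this
    linarith [le_norm_sub_sq hs]
  have hd₂ : ‖ζ‖ / 2 ≤ ‖ζ ^ 2 - r₂‖ := by
    have := sub_le_norm_sub_of_norm_sub_le (u := ζ ^ 2) h₂
    have hneg := le_norm_sub_sq (ζ := -ζ) (by rwa [norm_neg])
    rw [norm_neg, neg_sq] at hneg
    rw [norm_sub_rev (ζ ^ 2)] at this
    linarith
  calc ‖ζ ^ 2 - r₃‖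
      ≤ ‖(ζ ^ 2 - r₃) * (ζ ^ 2 - r₁) * (ζ ^ 2 - r₂)‖ / (‖ζ‖ / 2 * (‖ζ‖ / 2)) :=
        norm_sub_le_div_of_le_norm_sub (by positivity) (by positivity) hd₁ hd₂
    _ = ‖κ‖ * ‖ζ‖ ^ 6 / (‖ζ‖ / 2 * (‖ζ‖ / 2)) := by
        rw [← norm_apply_sq, hf]; ring_nf
    _ = 4 * ‖κ‖ * ‖ζ‖ ^ 4 := by field_simp; ring

include hκ

theorem norm_sub_approxRoot_le_div_64 : ‖ζ - approxRoot κ ζ‖ ≤ ‖ζ‖ / 64 := by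
  have hs0 := norm_nonneg ζ
  calc ‖ζ - approxRoot κ ζ‖ ≤ ‖κ‖ * ‖ζ‖ ^ 3 := norm_sub_approxRoot_le (by linarith)
    _ = ‖κ‖ * ‖ζ‖ * ‖ζ‖ * ‖ζ‖ := by ring
    _ ≤ 1 / 8 * (1 / 8) * ‖ζ‖ := by gcongr
    _ = ‖ζ‖ / 64 := by ring

theorem exists_roots_near (hζ : ζ ≠ 0) :
    ∃ r₁ r₂ r₃ : ℂ, (∀ z, reducedCubic κ ζ z = (z - r₁) * (z - r₂) * (z - r₃)) ∧
      ‖ζ - r₁‖ ≤ ‖ζ‖ / 4 ∧ ‖-ζ - r₂‖ ≤ ‖ζ‖ / 4 ∧ ‖ζ ^ 2 - r₃‖ ≤ ‖ζ‖ / 4 := by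
  have hs0 : 0 < ‖ζ‖ := norm_pos_iff.mpr hζ
  have h5 : ‖κ‖ * ‖ζ‖ ^ 5 < (‖ζ‖ / 4) ^ 3 := by
    have : ‖κ‖ * ‖ζ‖ * ‖ζ‖ < 1 / 64 := by nlinarith
    calc ‖κ‖ * ‖ζ‖ ^ 5 = ‖κ‖ * ‖ζ‖ * ‖ζ‖ * ‖ζ‖ ^ 3 := by ring
      _ < 1 / 64 * ‖ζ‖ ^ 3 := by gcongr
      _ = (‖ζ‖ / 4) ^ 3 := by ring
  have h6 : ‖κ‖ * ‖ζ‖ ^ 6 ≤ ‖κ‖ * ‖ζ‖ ^ 5 := by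
    gcongr ‖κ‖ * ?_
    exact pow_le_pow_of_le_one hs0.le (by linarith) (by norm_num)
  have hsep : 2 * (‖ζ‖ / 4) < 7 / 8 * ‖ζ‖ := by linarith
  obtain ⟨a, b, c, hf⟩ := exists_factorization κ ζ
  refine exists_factorization_roots_near hf (norm_apply_self.symm ▸ h5)
    (norm_apply_neg_self.symm ▸ h5) (norm_apply_sq.symm ▸ h6.trans_lt h5) ?_
    (hsep.trans_le (le_norm_sub_sq hs)) ?_
  · rw [sub_neg_eq_add, ← two_mul, norm_mul, Complex.norm_ofNat]; linarith
  · have := le_norm_sub_sq (ζ := -ζ) (by rwa [norm_neg])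
    rw [norm_neg, neg_sq] at this
    exact hsep.trans_le this

theorem norm_apply_approxRoot_le :
    ‖reducedCubic κ ζ (approxRoot κ ζ)‖ ≤ (‖κ‖ + 3 * ‖κ‖ ^ 2) * ‖ζ‖ ^ 7 := by
  set h := ζ - approxRoot κ ζ
  have hs0 := norm_nonneg ζ
  have hh : ‖h‖ ≤ ‖κ‖ * ‖ζ‖ ^ 3 := norm_sub_approxRoot_le (by linarith)
  have hh' : ‖h‖ ≤ ‖ζ‖ / 64 := norm_sub_approxRoot_le_div_64 hs hκ
  have hfac : ‖ζ - ζ ^ 2 - h‖ ≤ 2 * ‖ζ‖ := by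
    have h1 := norm_sub_le (ζ - ζ ^ 2) h
    have h2 := norm_sub_le ζ (ζ ^ 2)
    rw [norm_pow] at h2
    nlinarith
  have h8 : ‖ζ‖ ^ 8 ≤ ‖ζ‖ ^ 7 := pow_le_pow_of_le_one hs0 (by linarith) (by norm_num)
  rw [apply_approxRoot]
  refine (norm_add₃_le).trans ?_
  rw [norm_mul, norm_pow, norm_mul, norm_mul, norm_pow, norm_mul, norm_pow]
  calc ‖κ‖ * ‖ζ‖ ^ 7 + ‖κ‖ * ‖ζ‖ ^ 5 * ‖h‖ + ‖ζ - ζ ^ 2 - h‖ * ‖h‖ ^ 2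
      ≤ ‖κ‖ * ‖ζ‖ ^ 7 + ‖κ‖ * ‖ζ‖ ^ 5 * (‖κ‖ * ‖ζ‖ ^ 3)
          + 2 * ‖ζ‖ * (‖κ‖ * ‖ζ‖ ^ 3) ^ 2 := by gcongr
    _ = ‖κ‖ * ‖ζ‖ ^ 7 + ‖κ‖ ^ 2 * ‖ζ‖ ^ 8 + 2 * ‖κ‖ ^ 2 * ‖ζ‖ ^ 7 := by ring
    _ ≤ (‖κ‖ + 3 * ‖κ‖ ^ 2) * ‖ζ‖ ^ 7 := by nlinarith [sq_nonneg ‖κ‖]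

theorem norm_approxRoot_sub_root_le (hζ : ζ ≠ 0)
    (hf : ∀ z, reducedCubic κ ζ z = (z - r₁) * (z - r₂) * (z - r₃))
    (h₂ : ‖-ζ - r₂‖ ≤ ‖ζ‖ / 4) (h₃ : ‖ζ ^ 2 - r₃‖ ≤ ‖ζ‖ / 4) :
    ‖approxRoot κ ζ - r₁‖ ≤ 4 * (‖κ‖ + 3 * ‖κ‖ ^ 2) * ‖ζ‖ ^ 5 := by
  set w := approxRoot κ ζ
  have hs0 : 0 < ‖ζ‖ := norm_pos_iff.mpr hζ
  have hw := norm_sub_approxRoot_le_div_64 hs hκ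
  have hd₂ : ‖ζ‖ ≤ ‖w - r₂‖ := by
    have h1 := sub_le_norm_sub_of_norm_sub_le (u := w) h₂
    have h2 := norm_sub_le_norm_sub_add_norm_sub ζ w (-ζ)
    rw [sub_neg_eq_add, ← two_mul, norm_mul, Complex.norm_ofNat] at h2
    linarith
  have hd₃ : ‖ζ‖ / 4 ≤ ‖w - r₃‖ := by
    have h1 := sub_le_norm_sub_of_norm_sub_le (u := w) h₃
    have h2 := norm_sub_le_norm_sub_add_norm_sub ζ w (ζ ^ 2)
    linarith [le_norm_sub_sq hs]
  calc ‖w - r₁‖ ≤ ‖(w - r₁) * (w - r₂) * (w - r₃)‖ / (‖ζ‖ * (‖ζ‖ / 4)) :=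
        norm_sub_le_div_of_le_norm_sub (by positivity) (by positivity) hd₂ hd₃
    _ ≤ (‖κ‖ + 3 * ‖κ‖ ^ 2) * ‖ζ‖ ^ 7 / (‖ζ‖ * (‖ζ‖ / 4)) := by
        rw [← hf]; gcongr; exact norm_apply_approxRoot_le hs hκ
    _ = 4 * (‖κ‖ + 3 * ‖κ‖ ^ 2) * ‖ζ‖ ^ 5 := by field_simp

theorem exists_roots_near_approxRoot :
    ∃ r₁ r₃ : ℂ, reducedCubic κ ζ r₁ = 0 ∧ reducedCubic κ ζ r₃ = 0 ∧
      ‖r₁ - approxRoot κ ζ‖ ≤ 4 * (‖κ‖ + 3 * ‖κ‖ ^ 2) * ‖ζ‖ ^ 5 ∧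
      ‖r₃ - ζ ^ 2‖ ≤ 4 * (‖κ‖ + 3 * ‖κ‖ ^ 2) * ‖ζ‖ ^ 3 := by
  rcases eq_or_ne ζ 0 with rfl | hζ
  · exact ⟨0, 0, by simp [reducedCubic, approxRoot]⟩
  obtain ⟨r₁, r₂, r₃, hf, h₁, h₂, h₃⟩ := exists_roots_near hs hκ hζ
  refine ⟨r₁, r₃, by rw [hf]; ring, by rw [hf]; ring, ?_, ?_⟩
  · rw [norm_sub_rev]
    exact norm_approxRoot_sub_root_le hs hκ hζ hf h₂ h₃
  · rw [norm_sub_rev]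
    refine (norm_sq_sub_root_le hs hζ hf h₁ h₂).trans ?_
    have h43 : ‖ζ‖ ^ 4 ≤ ‖ζ‖ ^ 3 := pow_le_pow_of_le_one (norm_nonneg ζ) (by linarith) (by norm_num)
    calc 4 * ‖κ‖ * ‖ζ‖ ^ 4 ≤ 4 * ‖κ‖ * ‖ζ‖ ^ 3 := by gcongr
      _ ≤ 4 * (‖κ‖ + 3 * ‖κ‖ ^ 2) * ‖ζ‖ ^ 3 := by gcongr; nlinarith [sq_nonneg ‖κ‖]

end Small

theorem exists_root_branches (κ : ℂ) :
    ∃ δ > (0 : ℝ), ∃ C > (0 : ℝ), ∃ l₁ l₃ : ℂ → ℂ, ∀ ζ : ℂ, ‖ζ‖ ≤ δ →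
      reducedCubic κ ζ (l₁ ζ) = 0 ∧ reducedCubic κ ζ (l₃ ζ) = 0 ∧
      ‖l₁ ζ - approxRoot κ ζ‖ ≤ C * ‖ζ‖ ^ 5 ∧ ‖l₃ ζ - ζ ^ 2‖ ≤ C * ‖ζ‖ ^ 3 := by
  set K := ‖κ‖
  have hK := norm_nonneg κ
  have hroots : ∀ ζ : ℂ, ∃ r₁ r₃ : ℂ, ‖ζ‖ ≤ 1 / (8 * (K + 1)) →
      reducedCubic κ ζ r₁ = 0 ∧ reducedCubic κ ζ r₃ = 0 ∧
      ‖r₁ - approxRoot κ ζ‖ ≤ 4 * (K + 3 * K ^ 2) * ‖ζ‖ ^ 5 ∧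
      ‖r₃ - ζ ^ 2‖ ≤ 4 * (K + 3 * K ^ 2) * ‖ζ‖ ^ 3 := by
    intro ζ
    by_cases hζ : ‖ζ‖ ≤ 1 / (8 * (K + 1))
    · have hs : ‖ζ‖ ≤ 1 / 8 := hζ.trans (by gcongr; linarith)
      have hκ : K * ‖ζ‖ < 1 / 8 := by
        rw [le_div_iff₀ (by positivity)] at hζ
        nlinarith [norm_nonneg ζ]
      obtain ⟨r₁, r₃, h⟩ := exists_roots_near_approxRoot hs hκ
      exact ⟨r₁, r₃, fun _ => h⟩
    · exact ⟨0, 0, fun h => absurd h hζ⟩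
  choose l₁ l₃ hl using hroots
  refine ⟨1 / (8 * (K + 1)), by positivity, 4 * (K + 3 * K ^ 2) + 1, by positivity, l₁, l₃,
    fun ζ hζ => ?_⟩
  obtain ⟨h₁, h₃, hb₁, hb₃⟩ := hl ζ hζ
  exact ⟨h₁, h₃, hb₁.trans (by gcongr; linarith), hb₃.trans (by gcongr; linarith)⟩

end reducedCubic

theorem approxRoot_neg (κ ζ : ℂ) : approxRoot κ (-ζ) = -ζ + κ / 2 * ζ ^ 3 - κ / 2 * ζ ^ 4 := by
  unfold approxRoot; ring

section ImaginaryAxis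

open Complex

theorem abs_re_add_le_of_norm_sub_le {l a : ℂ} {b ε : ℝ} (ha : a.re = -b) (h : ‖l - a‖ ≤ ε) :
    |l.re + b| ≤ ε := by
  rw [← neg_neg b, ← ha, ← sub_eq_add_neg, ← Complex.sub_re]
  exact (abs_re_le_norm _).trans h

theorem approxRoot_I_mul_re (t x : ℝ) : (approxRoot t (I * x)).re = -(t / 2 * x ^ 4) := by
  have : approxRoot t (I * x) =
      ((-(t / 2 * x ^ 4) : ℝ) : ℂ) + ((x + t / 2 * x ^ 3 : ℝ) : ℂ) * I := by
    unfold approxRoot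
    push_cast
    ring_nf
    simp only [I_pow_four, show I ^ 3 = -I by rw [pow_succ, I_sq]; ring]
    ring
  rw [this, add_re, ofReal_re, re_ofReal_mul, I_re, mul_zero, add_zero]

theorem I_mul_sq_re (x : ℝ) : ((I * x) ^ 2).re = -x ^ 2 := by
  rw [mul_pow, I_sq, neg_one_mul, neg_re, ← ofReal_pow, ofReal_re]

theorem abs_re_add_le_of_branches {l₁ l₃ : ℂ → ℂ} {t δ C : ℝ}
    (hl : ∀ ζ : ℂ, ‖ζ‖ ≤ δ →
      ‖l₁ ζ - approxRoot t ζ‖ ≤ C * ‖ζ‖ ^ 5 ∧ ‖l₃ ζ - ζ ^ 2‖ ≤ C * ‖ζ‖ ^ 3)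
    {x : ℝ} (hx : |x| ≤ δ) :
    |(l₁ (I * x)).re + t / 2 * x ^ 4| ≤ C * |x| ^ 5 ∧
      |(l₁ (-(I * x))).re + t / 2 * x ^ 4| ≤ C * |x| ^ 5 ∧
      |(l₃ (I * x)).re + x ^ 2| ≤ C * |x| ^ 3 := by
  have hnorm : ∀ y : ℝ, ‖I * y‖ = |y| := by simp
  obtain ⟨h₁, h₃⟩ := hl (I * x) (by rwa [hnorm])
  obtain ⟨h₂, -⟩ := hl (I * ((-x : ℝ) : ℂ)) (by rwa [hnorm, abs_neg])
  rw [hnorm] at h₁ h₂ h₃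
  have h₂ := abs_re_add_le_of_norm_sub_le (approxRoot_I_mul_re t (-x)) h₂
  rw [ofReal_neg, mul_neg, Even.neg_pow (by decide), abs_neg] at h₂
  exact ⟨abs_re_add_le_of_norm_sub_le (approxRoot_I_mul_re t x) h₁, h₂,
    abs_re_add_le_of_norm_sub_le (I_mul_sq_re x) h₃⟩

end ImaginaryAxis

theorem neg_of_abs_add_le {x y b C : ℝ} {n : ℕ} (hx : 0 < |x|) (hCx : C * |x| < b)
    (h : |y + b * |x| ^ n| ≤ C * |x| ^ (n + 1)) : y < 0 := by
  have : C * |x| ^ (n + 1) < b * |x| ^ n := by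
    rw [pow_succ, mul_comm (|x| ^ n), ← mul_assoc]
    exact mul_lt_mul_of_pos_right hCx (pow_pos hx n)
  linarith [(abs_le.mp h).2]

theorem exists_neg_of_abs_add_le {f₁ f₂ f₃ : ℝ → ℝ} {b δ C : ℝ} (hb : 0 < b) (hδ : 0 < δ)
    (hC : 0 ≤ C) (h : ∀ x : ℝ, |x| ≤ δ → |f₁ x + b * x ^ 4| ≤ C * |x| ^ 5 ∧
      |f₂ x + b * x ^ 4| ≤ C * |x| ^ 5 ∧ |f₃ x + x ^ 2| ≤ C * |x| ^ 3) :
    ∃ δ' > (0 : ℝ), ∀ x : ℝ, 0 < |x| → |x| ≤ δ' → f₁ x < 0 ∧ f₂ x < 0 ∧ f₃ x < 0 := by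
  obtain ⟨c, hc, hCc⟩ := exists_pos_mul_lt (lt_min hb one_pos) C
  refine ⟨min δ c, lt_min hδ hc, fun x hx0 hx => ?_⟩
  obtain ⟨h₁, h₂, h₃⟩ := h x (hx.trans (min_le_left _ _))
  have hCx : C * |x| < min b 1 :=
    (mul_le_mul_of_nonneg_left (hx.trans (min_le_right _ _)) hC).trans_lt hCc
  rw [← Even.pow_abs (by decide) x] at h₁ h₂
  rw [← sq_abs, ← one_mul (|x| ^ 2)] at h₃
  exact ⟨neg_of_abs_add_le hx0 (hCx.trans_le (min_le_left _ _)) h₁,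
    neg_of_abs_add_le hx0 (hCx.trans_le (min_le_left _ _)) h₂,
    neg_of_abs_add_le hx0 (hCx.trans_le (min_le_right _ _)) h₃⟩

open Complex in
theorem stmt_18 (τ η : ℝ) (hτ : 0 < τ) (hη : 0 < η) :
    let P : ℂ → ℂ → ℂ := fun z ζ =>
      (τ : ℂ) * z ^ 4 + (1 - τ * ζ ^ 2) * z ^ 3
        + ((τ : ℂ) * η ^ 2 * ζ ^ 2 - τ - 1) * ζ ^ 2 * z ^ 2
        + (((η : ℂ) ^ 2 + τ) * ζ ^ 2 - 1) * ζ ^ 2 * z + ζ ^ 4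
    ∃ δ > (0 : ℝ), ∃ C > (0 : ℝ), ∃ l₁ l₂ l₃ l₄ : ℂ → ℂ,
      (∀ ζ : ℂ, ‖ζ‖ ≤ δ →
        (P (l₁ ζ) ζ = 0 ∧ P (l₂ ζ) ζ = 0 ∧ P (l₃ ζ) ζ = 0 ∧ P (l₄ ζ) ζ = 0) ∧
        ‖l₁ ζ - (ζ - ((η ^ 2 / 2 : ℝ) : ℂ) * ζ ^ 3 - ((η ^ 2 / 2 : ℝ) : ℂ) * ζ ^ 4)‖
          ≤ C * ‖ζ‖ ^ 5 ∧
        ‖l₂ ζ - (-ζ + ((η ^ 2 / 2 : ℝ) : ℂ) * ζ ^ 3 - ((η ^ 2 / 2 : ℝ) : ℂ) * ζ ^ 4)‖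
          ≤ C * ‖ζ‖ ^ 5 ∧
        ‖l₃ ζ - ζ ^ 2‖ ≤ C * ‖ζ‖ ^ 3 ∧
        ‖l₄ ζ - (-(1 / τ) : ℂ)‖ ≤ C * ‖ζ‖ ^ 2) ∧
      (∀ x : ℝ, |x| ≤ δ →
        |(l₁ (I * x)).re + η ^ 2 / 2 * x ^ 4| ≤ C * |x| ^ 5 ∧
        |(l₂ (I * x)).re + η ^ 2 / 2 * x ^ 4| ≤ C * |x| ^ 5 ∧
        |(l₃ (I * x)).re + x ^ 2| ≤ C * |x| ^ 3 ∧
        |(l₄ (I * x)).re + 1 / τ| ≤ C * x ^ 2) ∧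
      (∃ δ' > (0 : ℝ), ∀ x : ℝ, 0 < |x| → |x| ≤ δ' →
        (l₁ (I * x)).re < 0 ∧ (l₂ (I * x)).re < 0 ∧
        (l₃ (I * x)).re < 0 ∧ (l₄ (I * x)).re < 0) := by
  intro P
  set κ : ℂ := ((η ^ 2 : ℝ) : ℂ)
  have hκ : ((η ^ 2 / 2 : ℝ) : ℂ) = κ / 2 := by simp only [κ]; push_cast; ring
  have hP : ∀ z ζ, P z ζ = ((τ : ℂ) * z + 1) * reducedCubic κ ζ z := by
    intro z ζ; simp only [P, reducedCubic, κ]; push_cast; ring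
  have hroot₄ : (τ : ℂ) * -(1 / τ) + 1 = 0 := by
    field_simp [Complex.ofReal_ne_zero.mpr hτ.ne']; ring
  obtain ⟨δ, hδ, C, hC, l₁, l₃, hl⟩ := reducedCubic.exists_root_branches κ
  have hre := fun x (hx : |x| ≤ δ) =>
    abs_re_add_le_of_branches (fun ζ hζ => (hl ζ hζ).2.2) hx
  refine ⟨δ, hδ, C, hC, l₁, fun ζ => l₁ (-ζ), l₃, fun _ => -(1 / τ), fun ζ hζ => ?_,
    fun x hx => ?_, ?_⟩
  · obtain ⟨h₁, h₃, b₁, b₃⟩ := hl ζ hζ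
    obtain ⟨h₂, -, b₂, -⟩ := hl (-ζ) (by rwa [norm_neg])
    rw [reducedCubic.neg_param] at h₂
    rw [norm_neg, approxRoot_neg] at b₂
    simp only [hP, h₁, h₂, h₃, hroot₄, hκ, mul_zero, zero_mul, sub_self, norm_zero, and_self,
      true_and]
    exact ⟨b₁, b₂, b₃, by positivity⟩
  · obtain ⟨h₁, h₂, h₃⟩ := hre x hx
    exact ⟨h₁, h₂, h₃, by simp; positivity⟩
  · obtain ⟨δ', hδ', hneg⟩ := exists_neg_of_abs_add_le (by positivity) hδ hC.le hre
    exact ⟨δ', hδ', fun x hx0 hx => ⟨(hneg x hx0 hx).1, (hneg x hx0 hx).2.1, (hneg x hx0 hx).2.2,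
      by simpa using hτ⟩⟩
end
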